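/- arXiv:2510.21945 — 2 statements merged into one kernel-verified Lean document; each statement's English description precedes it below -/
import Mathlib

section
/- Let s > 0, r ∈ ℕ, and let S(r,s) = { A ∈ ℝ^{m×d} : rank(A) ≤ r, ‖A‖ ≤ s } where ‖·‖ is the spectral norm. For every ε > 0 there exists a finite set C ⊆ S(r,s) such that every A ∈ S(r,s) is within spectral-norm distance ε of some element of C, and log|C| ≤ (m+d) · r · log(1 + 6s/ε). -/
/-!
A matrix of rank at most `r` and spectral norm at most `s` factors as `W V` through `ℝ^r` with
`‖W‖ ≤ 1` and `‖V‖ ≤ s`: map its range isometrically into `ℝ^r`. Products `W' V'` of points of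
an `ε/(3s)`-net of the first ball and an `ε/3`-net of the second therefore form an internal
`ε`-cover, because `‖W V - W' V'‖ ≤ ‖W - W'‖ ‖V‖ + ‖W'‖ ‖V - V'‖`. A maximal `δ`-separated subset
of a ball of radius `κ` in dimension `D` is a `δ`-net, and comparing the volume of the disjoint
`δ/2`-balls around its points with that of the `(κ + δ/2)`-ball bounds its size by
`(1 + 2κ/δ)^D`; with the meshes above both nets have at most `(1 + 6s/ε)^D` points, for
`D = rm` and `D = dr`.
-/

/-- Spectral (operator) norm of a real matrix. -/
noncomputable def specNorm {m n : ℕ} (A : Matrix (Fin m) (Fin n) ℝ) : ℝ :=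
  ‖LinearMap.toContinuousLinearMap (Matrix.toEuclideanLin A)‖

open Metric MeasureTheory Module

theorem exists_separated_finset_covering_of_card_le {X : Type*} [PseudoMetricSpace X]
    {A : Set X} {δ : ℝ} (hδ : 0 ≤ δ) {B : ℕ}
    (hB : ∀ S : Finset X, ↑S ⊆ A → (S : Set X).Pairwise (δ < dist · ·) → S.card ≤ B) :
    ∃ N : Finset X, ↑N ⊆ A ∧ (N : Set X).Pairwise (δ < dist · ·) ∧
      ∀ x ∈ A, ∃ y ∈ N, dist x y ≤ δ := by
  classical
  let IsPacking (S : Finset X) : Prop := ↑S ⊆ A ∧ (S : Set X).Pairwise (δ < dist · ·)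
  let n := Nat.findGreatest (fun n ↦ ∃ S, IsPacking S ∧ S.card = n) B
  obtain ⟨S, hS, hSn⟩ : ∃ S, IsPacking S ∧ S.card = n :=
    Nat.findGreatest_spec (P := fun n ↦ ∃ S, IsPacking S ∧ S.card = n) (Nat.zero_le B)
      ⟨∅, by simp [IsPacking], rfl⟩
  refine ⟨S, hS.1, hS.2, fun x hx ↦ ?_⟩
  by_contra! hfar
  have hxS : x ∉ S := fun h ↦ by simpa using (hfar x h).trans_le' hδ
  have hxS' : IsPacking (insert x S) := by
    refine ⟨by simpa [Set.insert_subset_iff] using ⟨hx, hS.1⟩, ?_⟩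
    rw [Finset.coe_insert]
    exact Set.pairwise_insert.2 ⟨hS.2, fun y hy _ ↦ ⟨hfar y hy, dist_comm x y ▸ hfar y hy⟩⟩
  have : S.card + 1 ≤ n :=
    Nat.le_findGreatest (Finset.card_insert_of_notMem hxS ▸ hB _ hxS'.1 hxS'.2)
      ⟨_, hxS', Finset.card_insert_of_notMem hxS⟩
  omega

theorem card_le_of_subset_closedBall_of_pairwise_lt_dist {E : Type*} [NormedAddCommGroup E]
    [NormedSpace ℝ E] [FiniteDimensional ℝ E] {κ δ : ℝ} (hκ : 0 ≤ κ) (hδ : 0 < δ)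
    {S : Finset E} (hS : ↑S ⊆ closedBall (0 : E) κ) (hsep : (S : Set E).Pairwise (δ < dist · ·)) :
    (S.card : ℝ) ≤ (1 + 2 * κ / δ) ^ finrank ℝ E := by
  borelize E
  set μ : Measure E := Measure.addHaar
  have hμ : 0 < μ.real (ball 0 1) :=
    ENNReal.toReal_pos (measure_ball_pos μ 0 one_pos).ne' measure_ball_lt_top.ne
  have hdisj : (S : Set E).PairwiseDisjoint (closedBall · (δ / 2)) :=
    hsep.mono' fun x y h ↦ closedBall_disjoint_closedBall (by linarith)
  have hunion : ⋃ x ∈ S, closedBall x (δ / 2) ⊆ closedBall 0 (κ + δ / 2) :=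
    Set.iUnion₂_subset fun x hx ↦ closedBall_subset_closedBall' (by
      have := mem_closedBall.1 (hS hx); linarith)
  have hvol : S.card * ((δ / 2) ^ finrank ℝ E * μ.real (ball 0 1)) ≤
      (κ + δ / 2) ^ finrank ℝ E * μ.real (ball 0 1) :=
    calc S.card * ((δ / 2) ^ finrank ℝ E * μ.real (ball 0 1))
        = μ.real (⋃ x ∈ S, closedBall x (δ / 2)) := by
          rw [measureReal_biUnion_finset hdisj (fun _ _ ↦ measurableSet_closedBall)
            fun _ _ ↦ measure_closedBall_lt_top.ne]
          simp [Measure.addHaar_real_closedBall μ _ (by positivity : 0 ≤ δ / 2)]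
      _ ≤ μ.real (closedBall 0 (κ + δ / 2)) :=
          measureReal_mono hunion measure_closedBall_lt_top.ne
      _ = (κ + δ / 2) ^ finrank ℝ E * μ.real (ball 0 1) :=
          Measure.addHaar_real_closedBall μ _ (by positivity)
  calc (S.card : ℝ) ≤ (κ + δ / 2) ^ finrank ℝ E / (δ / 2) ^ finrank ℝ E := by
        rw [le_div_iff₀ (by positivity)]
        nlinarith
    _ = (1 + 2 * κ / δ) ^ finrank ℝ E := by
        rw [← div_pow]
        congr 1
        field_simp
        ring

theorem exists_finset_net_closedBall {E : Type*} [NormedAddCommGroup E] [NormedSpace ℝ E]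
    [FiniteDimensional ℝ E] {κ δ : ℝ} (hκ : 0 ≤ κ) (hδ : 0 < δ) :
    ∃ N : Finset E, ↑N ⊆ closedBall (0 : E) κ ∧
      (∀ x ∈ closedBall (0 : E) κ, ∃ y ∈ N, ‖x - y‖ ≤ δ) ∧
      (N.card : ℝ) ≤ (1 + 2 * κ / δ) ^ finrank ℝ E := by
  obtain ⟨N, hNsub, hNsep, hNcov⟩ := exists_separated_finset_covering_of_card_le hδ.le
    fun S hS hsep ↦ Nat.le_floor <|
      card_le_of_subset_closedBall_of_pairwise_lt_dist (E := E) hκ hδ hS hsep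
  exact ⟨N, hNsub, by simpa only [dist_eq_norm] using hNcov,
    card_le_of_subset_closedBall_of_pairwise_lt_dist hκ hδ hNsub hNsep⟩

theorem exists_linearIsometry_of_finrank_le {𝕜 E F : Type*} [RCLike 𝕜]
    [NormedAddCommGroup E] [InnerProductSpace 𝕜 E] [FiniteDimensional 𝕜 E]
    [NormedAddCommGroup F] [InnerProductSpace 𝕜 F] [FiniteDimensional 𝕜 F]
    (h : finrank 𝕜 E ≤ finrank 𝕜 F) : Nonempty (E →ₗᵢ[𝕜] F) := by
  let bE := stdOrthonormalBasis 𝕜 E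
  let bF := stdOrthonormalBasis 𝕜 F
  have hv : Orthonormal 𝕜 (bF ∘ Fin.castLE h) := bF.orthonormal.comp _ (Fin.castLE_injective h)
  refine ⟨(bE.toBasis.constr 𝕜 (bF ∘ Fin.castLE h)).isometryOfOrthonormal
    (v := bE.toBasis) (by simp [bE.orthonormal]) ?_⟩
  convert hv
  ext i
  simp

theorem ContinuousLinearMap.exists_comp_eq_of_finrank_range_le {𝕜 E F G : Type*} [RCLike 𝕜]
    [NormedAddCommGroup E] [NormedSpace 𝕜 E] [FiniteDimensional 𝕜 E]
    [NormedAddCommGroup F] [InnerProductSpace 𝕜 F] [FiniteDimensional 𝕜 F]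
    [NormedAddCommGroup G] [InnerProductSpace 𝕜 G] [FiniteDimensional 𝕜 G]
    (T : E →L[𝕜] F) (h : finrank 𝕜 (LinearMap.range (T : E →ₗ[𝕜] F)) ≤ finrank 𝕜 G) :
    ∃ (W : G →L[𝕜] F) (V : E →L[𝕜] G), ‖W‖ ≤ 1 ∧ ‖V‖ ≤ ‖T‖ ∧ W ∘L V = T := by
  have := FiniteDimensional.complete 𝕜 G
  obtain ⟨ι⟩ := exists_linearIsometry_of_finrank_le h
  let V : E →L[𝕜] G :=
    ι.toContinuousLinearMap ∘L LinearMap.toContinuousLinearMap (T : E →ₗ[𝕜] F).rangeRestrict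
  have hV : ∀ y, ‖V y‖ = ‖T y‖ := fun y ↦ ι.norm_map _
  let K := LinearMap.range (T : E →ₗ[𝕜] F)
  refine ⟨K.subtypeL ∘L ι.toContinuousLinearMap.adjoint, V, ?_, ?_, ?_⟩
  · calc _ ≤ ‖K.subtypeL‖ * ‖ι.toContinuousLinearMap.adjoint‖ := opNorm_comp_le _ _
      _ ≤ 1 * 1 := by
          gcongr
          · exact Submodule.norm_subtypeL_le _
          · rw [LinearIsometryEquiv.norm_map]
            exact ι.norm_toContinuousLinearMap_le
      _ = 1 := one_mul 1
  · exact opNorm_le_bound _ (norm_nonneg T) fun y ↦ (hV y).trans_le (T.le_opNorm y)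
  · ext y
    change ((ι.toContinuousLinearMap.adjoint ∘L ι.toContinuousLinearMap)
      ((T : E →ₗ[𝕜] F).rangeRestrict y) : F) = T y
    rw [ι.adjoint_comp_self]
    rfl

theorem ContinuousLinearMap.norm_comp_sub_comp_le {𝕜 E F G : Type*} [NontriviallyNormedField 𝕜]
    [SeminormedAddCommGroup E] [NormedSpace 𝕜 E] [SeminormedAddCommGroup F] [NormedSpace 𝕜 F]
    [SeminormedAddCommGroup G] [NormedSpace 𝕜 G] (W W' : G →L[𝕜] F) (V V' : E →L[𝕜] G) :
    ‖W ∘L V - W' ∘L V'‖ ≤ ‖W - W'‖ * ‖V‖ + ‖W'‖ * ‖V - V'‖ :=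
  calc ‖W ∘L V - W' ∘L V'‖ = ‖(W - W') ∘L V + W' ∘L (V - V')‖ := by
        rw [sub_comp, comp_sub, sub_add_sub_cancel]
    _ ≤ ‖W - W'‖ * ‖V‖ + ‖W'‖ * ‖V - V'‖ :=
        (norm_add_le _ _).trans (add_le_add (opNorm_comp_le _ _) (opNorm_comp_le _ _))

theorem exists_finset_net_finrank_range_le (E F G : Type*)
    [NormedAddCommGroup E] [NormedSpace ℝ E] [FiniteDimensional ℝ E]
    [NormedAddCommGroup F] [InnerProductSpace ℝ F] [FiniteDimensional ℝ F]
    [NormedAddCommGroup G] [InnerProductSpace ℝ G] [FiniteDimensional ℝ G]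
    {s ε : ℝ} (hs : 0 < s) (hε : 0 < ε) :
    ∃ C : Finset (E →L[ℝ] F),
      (∀ T ∈ C, finrank ℝ (LinearMap.range (T : E →ₗ[ℝ] F)) ≤ finrank ℝ G ∧ ‖T‖ ≤ s) ∧
      (∀ T : E →L[ℝ] F, finrank ℝ (LinearMap.range (T : E →ₗ[ℝ] F)) ≤ finrank ℝ G → ‖T‖ ≤ s →
        ∃ T' ∈ C, ‖T - T'‖ ≤ ε) ∧
      (C.card : ℝ) ≤ (1 + 6 * s / ε) ^ (finrank ℝ (G →L[ℝ] F) + finrank ℝ (E →L[ℝ] G)) := by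
  classical
  obtain ⟨N₁, hN₁, hcov₁, hcard₁⟩ :=
    exists_finset_net_closedBall (E := G →L[ℝ] F) zero_le_one (δ := ε / (3 * s)) (by positivity)
  obtain ⟨N₂, hN₂, hcov₂, hcard₂⟩ :=
    exists_finset_net_closedBall (E := E →L[ℝ] G) hs.le (δ := ε / 3) (by positivity)
  refine ⟨Finset.image₂ (· ∘L ·) N₁ N₂, ?_, fun T hrank hT ↦ ?_, ?_⟩
  · simp only [Finset.mem_image₂]
    rintro _ ⟨W, hW, V, hV, rfl⟩
    rw [← Finset.mem_coe] at hW hV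
    refine ⟨?_, ?_⟩
    · calc finrank ℝ (LinearMap.range ((W ∘L V : E →L[ℝ] F) : E →ₗ[ℝ] F))
          ≤ finrank ℝ (LinearMap.range (W : G →ₗ[ℝ] F)) :=
            Submodule.finrank_mono (LinearMap.range_comp_le_range _ _)
        _ ≤ finrank ℝ G := LinearMap.finrank_range_le _
    · calc ‖W ∘L V‖ ≤ ‖W‖ * ‖V‖ := W.opNorm_comp_le V
        _ ≤ 1 * s := by
            gcongr
            · exact mem_closedBall_zero_iff.1 (hN₁ hW)
            · exact mem_closedBall_zero_iff.1 (hN₂ hV)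
        _ = s := one_mul s
  · obtain ⟨W, V, hW, hV, rfl⟩ := T.exists_comp_eq_of_finrank_range_le hrank
    obtain ⟨W', hW', hWW'⟩ := hcov₁ W (mem_closedBall_zero_iff.2 hW)
    obtain ⟨V', hV', hVV'⟩ := hcov₂ V (mem_closedBall_zero_iff.2 (hV.trans hT))
    refine ⟨W' ∘L V', Finset.mem_image₂_of_mem hW' hV', ?_⟩
    have hW'1 : ‖W'‖ ≤ 1 := mem_closedBall_zero_iff.1 (hN₁ hW')
    calc ‖W ∘L V - W' ∘L V'‖ ≤ ‖W - W'‖ * ‖V‖ + ‖W'‖ * ‖V - V'‖ :=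
          ContinuousLinearMap.norm_comp_sub_comp_le _ _ _ _
      _ ≤ ε / (3 * s) * s + 1 * (ε / 3) := by gcongr; exact hV.trans hT
      _ ≤ ε := by field_simp; linarith
  · have h₁ : 1 + 2 * 1 / (ε / (3 * s)) = 1 + 6 * s / ε := by field_simp; ring
    have h₂ : 1 + 2 * s / (ε / 3) = 1 + 6 * s / ε := by field_simp; ring
    rw [h₁] at hcard₁
    rw [h₂] at hcard₂
    calc ((Finset.image₂ (· ∘L ·) N₁ N₂).card : ℝ) ≤ (N₁.card * N₂.card : ℕ) :=
          Nat.cast_le.2 (Finset.card_image₂_le _ _ _)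
      _ ≤ _ := by rw [Nat.cast_mul, pow_add]; gcongr

noncomputable def Matrix.toEuclideanCLMEquiv {m n : Type*} [Fintype m] [Fintype n]
    [DecidableEq n] :
    Matrix m n ℝ ≃ₗ[ℝ] (EuclideanSpace ℝ n →L[ℝ] EuclideanSpace ℝ m) :=
  Matrix.toEuclideanLin.trans LinearMap.toContinuousLinearMap

theorem Matrix.rank_eq_finrank_range_toEuclideanCLMEquiv {m n : Type*} [Fintype m] [Fintype n]
    [DecidableEq n] (A : Matrix m n ℝ) :
    A.rank = finrank ℝ (LinearMap.range
      ((A.toEuclideanCLMEquiv : EuclideanSpace ℝ n →L[ℝ] EuclideanSpace ℝ m) :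
        EuclideanSpace ℝ n →ₗ[ℝ] EuclideanSpace ℝ m)) := by
  rw [A.rank_eq_finrank_range_toLin (EuclideanSpace.basisFun m ℝ).toBasis
    (EuclideanSpace.basisFun n ℝ).toBasis]
  rfl

theorem specNorm_eq_norm_toEuclideanCLMEquiv {m n : ℕ} (A : Matrix (Fin m) (Fin n) ℝ) :
    specNorm A = ‖A.toEuclideanCLMEquiv‖ :=
  rfl

theorem finrank_euclideanSpace_continuousLinearMap (m n : ℕ) :
    finrank ℝ (EuclideanSpace ℝ (Fin n) →L[ℝ] EuclideanSpace ℝ (Fin m)) = n * m := by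
  rw [← LinearMap.toContinuousLinearMap.finrank_eq, Module.finrank_linearMap,
    finrank_euclideanSpace_fin, finrank_euclideanSpace_fin]

theorem Real.log_natCast_le_mul_log {n k : ℕ} {x : ℝ} (hx : 1 ≤ x) (h : (n : ℝ) ≤ x ^ k) :
    Real.log n ≤ k * Real.log x := by
  rcases n.eq_zero_or_pos with rfl | hn
  · simpa using mul_nonneg k.cast_nonneg (Real.log_nonneg hx)
  · rw [← Real.log_pow]
    exact Real.log_le_log (by positivity) h

/-- parameter-counting cover of low-rank matrices with bounded
spectral norm: the class `S(r,s) = {A : rank A ≤ r, ‖A‖ ≤ s}` admits an internal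
`ε`-cover `C` (in spectral norm) with `log |C| ≤ (m+d)·r·log(1 + 6s/ε)`. -/
theorem lowrank_cover (m d r : ℕ) (s ε : ℝ) (hs : 0 < s) (hε : 0 < ε) :
    ∃ C : Finset (Matrix (Fin m) (Fin d) ℝ),
      (∀ B ∈ C, B.rank ≤ r ∧ specNorm B ≤ s) ∧
      (∀ A : Matrix (Fin m) (Fin d) ℝ, A.rank ≤ r → specNorm A ≤ s →
        ∃ B ∈ C, specNorm (A - B) ≤ ε) ∧
      Real.log C.card ≤ ((m : ℝ) + d) * r * Real.log (1 + 6 * s / ε) := by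
  classical
  obtain ⟨C, hCmem, hCcov, hCcard⟩ := exists_finset_net_finrank_range_le
    (EuclideanSpace ℝ (Fin d)) (EuclideanSpace ℝ (Fin m)) (EuclideanSpace ℝ (Fin r)) hs hε
  simp only [finrank_euclideanSpace_fin, finrank_euclideanSpace_continuousLinearMap]
    at hCmem hCcov hCcard
  refine ⟨C.image Matrix.toEuclideanCLMEquiv.symm, ?_, fun A hA hAs ↦ ?_, ?_⟩
  · simp only [Finset.mem_image]
    rintro _ ⟨T, hT, rfl⟩
    rw [Matrix.rank_eq_finrank_range_toEuclideanCLMEquiv, specNorm_eq_norm_toEuclideanCLMEquiv,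
      LinearEquiv.apply_symm_apply]
    exact hCmem T hT
  · rw [Matrix.rank_eq_finrank_range_toEuclideanCLMEquiv] at hA
    obtain ⟨T, hT, hAT⟩ := hCcov _ hA hAs
    refine ⟨_, Finset.mem_image_of_mem _ hT, ?_⟩
    simpa [specNorm_eq_norm_toEuclideanCLMEquiv] using hAT
  · have hx : 1 ≤ 1 + 6 * s / ε := le_add_of_nonneg_right (by positivity)
    refine (Real.log_natCast_le_mul_log hx
      ((Nat.cast_le.2 Finset.card_image_le).trans hCcard)).trans_eq ?_
    push_cast
    ring
end

section
/- Consider an L-layer network F_A(x) = A_L σ_L(A_{L-1} σ_{L-1}(⋯σ₁(A₁x)⋯)) with σ_ℓ elementwise ρ_ℓ-Lipschitz and ‖A_ℓ‖ ≤ s_ℓ. Suppose for each ℓ a cover element Ā_ℓ satisfies ‖(A_ℓ − Ā_ℓ) F^{0→ℓ-1}_{Ā₁,...,Ā_{ℓ-1}}(xᵢ)‖ ≤ ε_ℓ for all i. Then ‖F_A(xᵢ) − F_{Ā}(xᵢ)‖ ≤ ∑_{ℓ=1}^L ε_ℓ ρ_{ℓ→L}, where ρ_{ℓ→L} := ρ_ℓ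 ∏_{m=ℓ+1}^L ρ_m s_m. -/
/-- Euclidean (L²) norm of a real vector. -/
noncomputable def euclNorm {n : ℕ} (v : Fin n → ℝ) : ℝ :=
  Real.sqrt (∑ i, (v i) ^ 2)

/-- The partial network up to layer `ℓ` (0-based layers: layer `j` applies the matrix
`A j` followed by the elementwise activation `σ j`):
`net (ℓ+1) x = σ ℓ (A ℓ · net ℓ x)`, `net 0 x = x`. -/
noncomputable def net (w : ℕ → ℕ) (σ : ℕ → ℝ → ℝ)
    (A : (j : ℕ) → Matrix (Fin (w (j + 1))) (Fin (w j)) ℝ) :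
    (ℓ : ℕ) → (Fin (w 0) → ℝ) → Fin (w ℓ) → ℝ
  | 0, x => x
  | (j + 1), x => fun k => σ j (((A j).mulVec (net w σ A j x)) k)

lemma euclNorm_eq {n : ℕ} (v : Fin n → ℝ) :
    euclNorm v = ‖(WithLp.equiv 2 (Fin n → ℝ)).symm v‖ := by
  rw [EuclideanSpace.norm_eq, euclNorm]
  congr 1
  refine Finset.sum_congr rfl fun i _ => ?_
  rw [Real.norm_eq_abs, sq_abs]
  rfl

lemma euclNorm_nonneg {n : ℕ} (v : Fin n → ℝ) : 0 ≤ euclNorm v :=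
  Real.sqrt_nonneg _

lemma euclNorm_mulVec_le {m n : ℕ} (A : Matrix (Fin m) (Fin n) ℝ) (v : Fin n → ℝ) :
    euclNorm (A.mulVec v) ≤ specNorm A * euclNorm v := by
  rw [euclNorm_eq, euclNorm_eq, specNorm]
  have := (LinearMap.toContinuousLinearMap (Matrix.toEuclideanLin A)).le_opNorm
    ((WithLp.equiv 2 (Fin n → ℝ)).symm v)
  simpa using this

lemma euclNorm_add_le {n : ℕ} (a b : Fin n → ℝ) :
    euclNorm (fun k => a k + b k) ≤ euclNorm a + euclNorm b := by
  rw [euclNorm_eq, euclNorm_eq, euclNorm_eq]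
  exact norm_add_le ((WithLp.equiv 2 (Fin n → ℝ)).symm a) ((WithLp.equiv 2 (Fin n → ℝ)).symm b)

lemma euclNorm_lipschitz {n : ℕ} (f : ℝ → ℝ) (c : ℝ) (hc : 0 ≤ c)
    (hf : ∀ a b : ℝ, |f a - f b| ≤ c * |a - b|) (u v : Fin n → ℝ) :
    euclNorm (fun k => f (u k) - f (v k)) ≤ c * euclNorm (fun k => u k - v k) := by
  rw [euclNorm, euclNorm, ← Real.sqrt_sq hc, ← Real.sqrt_mul (sq_nonneg c), Finset.mul_sum]
  apply Real.sqrt_le_sqrt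
  refine Finset.sum_le_sum fun k _ => ?_
  calc (f (u k) - f (v k)) ^ 2 = |f (u k) - f (v k)| ^ 2 := (sq_abs _).symm
    _ ≤ (c * |u k - v k|) ^ 2 := by
        apply pow_le_pow_left₀ (abs_nonneg _) (hf _ _)
    _ = c ^ 2 * (u k - v k) ^ 2 := by rw [mul_pow, sq_abs]

/-- telescoping error propagation in deep networks: if each layer's
cover element satisfies `‖(A_ℓ − Ā_ℓ) F^{0→ℓ-1}_{Ā}(xᵢ)‖ ≤ ε_ℓ`, the activations `σ_ℓ`
are `ρ_ℓ`-Lipschitz and `‖A_ℓ‖, ‖Ā_ℓ‖ ≤ s_ℓ`, then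
`‖F_A(xᵢ) − F_Ā(xᵢ)‖ ≤ ∑_ℓ ε_ℓ · ρ_{ℓ→L}` with `ρ_{ℓ→L} = ρ_ℓ ∏_{m>ℓ} ρ_m s_m`. -/
theorem deep_network_cover_propagation (L N : ℕ) (w : ℕ → ℕ) (σ : ℕ → ℝ → ℝ)
    (ρ s : ℕ → ℝ) (hρ0 : ∀ j, 0 ≤ ρ j) (hs0 : ∀ j, 0 ≤ s j)
    (hσ : ∀ j, ∀ a b : ℝ, |σ j a - σ j b| ≤ ρ j * |a - b|)
    (A Ab : (j : ℕ) → Matrix (Fin (w (j + 1))) (Fin (w j)) ℝ)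
    (hA : ∀ j, specNorm (A j) ≤ s j) (hAb : ∀ j, specNorm (Ab j) ≤ s j)
    (xs : Fin N → Fin (w 0) → ℝ) (ε : ℕ → ℝ)
    (hcov : ∀ j, ∀ i, euclNorm ((A j - Ab j).mulVec (net w σ Ab j (xs i))) ≤ ε j) :
    ∀ i, euclNorm (fun k => net w σ A L (xs i) k - net w σ Ab L (xs i) k)
      ≤ ∑ j ∈ Finset.range L,
          ε j * (ρ j * ∏ m ∈ Finset.Ico (j + 1) L, ρ m * s m) := by
  intro i
  induction L with
  | zero => simp [net, euclNorm]
  | succ L ih =>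
    set u := net w σ A L (xs i) with hu
    set v := net w σ Ab L (xs i) with hv
    set Ssum := ∑ j ∈ Finset.range L, ε j * (ρ j * ∏ m ∈ Finset.Ico (j + 1) L, ρ m * s m)
      with hS
    have hεL : 0 ≤ ε L := le_trans (euclNorm_nonneg _) (hcov L i)
    have hS0 : 0 ≤ euclNorm fun k => u k - v k := euclNorm_nonneg _
    have key : (fun k => net w σ A (L + 1) (xs i) k - net w σ Ab (L + 1) (xs i) k)
        = fun k => σ L (((A L).mulVec u) k) - σ L (((Ab L).mulVec v) k) := rfl
    have hsplit : (fun k => ((A L).mulVec u) k - ((Ab L).mulVec v) k)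
        = fun k => ((A L).mulVec (fun j => u j - v j)) k + (((A L - Ab L)).mulVec v) k := by
      funext k
      simp only [Matrix.sub_mulVec]
      have : (A L).mulVec (fun j => u j - v j) = (A L).mulVec u - (A L).mulVec v := by
        have : (fun j => u j - v j) = u - v := rfl
        rw [this, Matrix.mulVec_sub]
      rw [this]
      simp [Pi.sub_apply]
    have hrhs : ∑ j ∈ Finset.range (L + 1),
        ε j * (ρ j * ∏ m ∈ Finset.Ico (j + 1) (L + 1), ρ m * s m)
        = ρ L * s L * Ssum + ρ L * ε L := by
      rw [Finset.sum_range_succ, hS, Finset.mul_sum]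
      congr 1
      · refine Finset.sum_congr rfl fun j hj => ?_
        rw [Finset.prod_Ico_succ_top (Nat.succ_le_of_lt (Finset.mem_range.mp hj))]
        ring
      · simp [Finset.Ico_self]; ring
    rw [key, hrhs]
    calc euclNorm (fun k => σ L (((A L).mulVec u) k) - σ L (((Ab L).mulVec v) k))
        ≤ ρ L * euclNorm (fun k => ((A L).mulVec u) k - ((Ab L).mulVec v) k) :=
          euclNorm_lipschitz _ _ (hρ0 L) (hσ L) _ _
      _ ≤ ρ L * (euclNorm ((A L).mulVec (fun j => u j - v j))
            + euclNorm (((A L - Ab L)).mulVec v)) := by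
          apply mul_le_mul_of_nonneg_left _ (hρ0 L)
          rw [hsplit]
          exact euclNorm_add_le _ _
      _ ≤ ρ L * (s L * Ssum + ε L) := by
          apply mul_le_mul_of_nonneg_left _ (hρ0 L)
          gcongr
          · calc euclNorm ((A L).mulVec (fun j => u j - v j))
                ≤ specNorm (A L) * euclNorm (fun j => u j - v j) := euclNorm_mulVec_le _ _
              _ ≤ s L * Ssum := by
                  apply mul_le_mul (hA L) ih hS0
                  exact le_trans (norm_nonneg _) (hA L)
          · exact hcov L i
      _ = ρ L * s L * Ssum + ρ L * ε L := by ring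
end
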